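/- arXiv:2001.01275 — 3 statements merged into one kernel-verified Lean document; each statement's English description precedes it below -/
import Mathlib

section
/- For two nonzero vectors w_m, w_n in R^d with angle θ between them (θ ∈ [0, π]), if x is drawn uniformly from the unit sphere in R^d, then the probability that sgn(⟨x, w_m⟩) = sgn(⟨x, w_n⟩) equals 1 − θ/π. -/
/-!
Fix orthonormal `u, e`, put `r α = cos α • u + sin α • e` and let `g α` be the probability that the
hyperplane `x^⊥` separates `u` from `r α`. Rotations in the plane of `u, e` show that `g β` is
also the probability of separating `r α` from `r (α + β)`; as `r α` lies in the cone spanned by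
`u` and `r (α + β)` when `α + β < π`, no hyperplane separates both pairs, so `g` is additive.
Proper subspaces are null: rotating one yields infinitely many copies of equal measure whose
pairwise intersections are smaller subspaces, null by induction on the dimension. Hence
`g α + g (π - α) = 1`, and a nonnegative additive function with this symmetry is `α / π`.
-/

open MeasureTheory Real

noncomputable def sgn (x : ℝ) : ℝ := if 0 ≤ x then 1 else -1

open InnerProductGeometry
open scoped RealInnerProductSpace

namespace RandomHyperplane

section Additive

variable {L : ℝ} {f : ℝ → ℝ} (hL : 0 < L) (hnonneg : ∀ x ∈ Set.Icc 0 L, 0 ≤ f x)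
  (hzero : f 0 = 0) (hadd : ∀ x y, 0 < x → 0 < y → x + y < L → f (x + y) = f x + f y)
  (hsymm : ∀ x ∈ Set.Icc 0 L, f x + f (L - x) = 1)

include hL in
theorem nat_mul_div_succ_lt {n k : ℕ} (hk : k ≤ n) : (k : ℝ) * (L / (n + 1)) < L := by
  rw [mul_div_assoc', div_lt_iff₀ (by positivity)]
  have : (k : ℝ) ≤ n := by exact_mod_cast hk
  nlinarith

include hnonneg hadd in
theorem monotoneOn_of_additive : MonotoneOn f (Set.Ioo 0 L) := by
  intro x hx y hy hxy
  rcases hxy.eq_or_lt with rfl | hlt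
  · rfl
  have := hadd x (y - x) hx.1 (by linarith) (by linarith [hy.2])
  rw [add_sub_cancel] at this
  linarith [hnonneg (y - x) ⟨by linarith, by linarith [hy.2, hx.1]⟩]

include hL hzero hadd hsymm in
theorem apply_nat_mul_div_succ {n k : ℕ} (hk : k ≤ n) :
    f (k * (L / (n + 1))) = k / (n + 1) := by
  have hh : 0 < L / (n + 1) := by positivity
  have hmul : ∀ k ≤ n, f (k * (L / (n + 1))) = k * f (L / (n + 1)) := by
    intro k hk
    induction k with
    | zero => simp [hzero]
    | succ k ih =>
      rcases Nat.eq_zero_or_pos k with rfl | hk0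
      · simp
      have hlt := nat_mul_div_succ_lt hL hk
      push_cast at hlt ⊢
      rw [add_mul, one_mul, hadd _ _ (by positivity) hh (by linarith), ih (by omega)]
      ring
  -- from `f (n h) + f h = 1`, where `h = L / (n + 1)`
  have hstep : f (L / (n + 1)) = 1 / (n + 1) := by
    have hlast := hsymm (n * (L / (n + 1))) ⟨by positivity, (nat_mul_div_succ_lt hL le_rfl).le⟩
    rw [hmul n le_rfl, show L - n * (L / (n + 1)) = L / (n + 1) by field_simp; ring] at hlast
    field_simp
    linarith
  rw [hmul k hk, hstep]
  ring

include hL hnonneg hzero hadd hsymm in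
theorem le_div_add_one_div_succ {x : ℝ} (hx : x ∈ Set.Icc 0 L) (n : ℕ) :
    f x ≤ x / L + 1 / (n + 1) := by
  set k := ⌊(n + 1) * x / L⌋₊ + 1 with hk
  have hkx : x < k * (L / (n + 1)) := by
    have : (n + 1) * x / L < k := by rw [hk]; push_cast; exact Nat.lt_floor_add_one _
    rw [div_lt_iff₀ hL] at this
    rw [mul_div_assoc', lt_div_iff₀ (by positivity)]
    linarith
  have hkn : (k : ℝ) / (n + 1) ≤ x / L + 1 / (n + 1) := by
    have := Nat.floor_le (by have := hx.1; positivity : 0 ≤ (n + 1) * x / L)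
    rw [show x / L + 1 / (n + 1) = ((n + 1) * x / L + 1) / (n + 1) by field_simp, hk]
    gcongr
    push_cast
    linarith
  refine le_trans ?_ hkn
  rcases hx.1.eq_or_lt with rfl | hx0
  · rw [hzero]; positivity
  by_cases hkn : k ≤ n
  · rw [← apply_nat_mul_div_succ hL hzero hadd hsymm hkn]
    have hkL := nat_mul_div_succ_lt hL hkn
    exact monotoneOn_of_additive hnonneg hadd ⟨hx0, hkx.trans hkL⟩ ⟨hx0.trans hkx, hkL⟩ hkx.le
  · have hLx : L - x ∈ Set.Icc 0 L := ⟨by linarith [hx.2], by linarith [hx.1]⟩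
    calc f x ≤ 1 := by linarith [hsymm x hx, hnonneg (L - x) hLx]
      _ ≤ k / (n + 1) := by
        rw [le_div_iff₀ (by positivity), one_mul]
        exact_mod_cast (by omega : n + 1 ≤ k)

include hL hnonneg hzero hadd hsymm in
theorem eq_div_of_additive_of_add_sub_eq_one {x : ℝ} (hx : x ∈ Set.Icc 0 L) : f x = x / L := by
  have hLx : L - x ∈ Set.Icc 0 L := ⟨by linarith [hx.2], by linarith [hx.1]⟩
  refine eq_of_forall_dist_le fun ε hε => ?_
  obtain ⟨n, hn⟩ := exists_nat_one_div_lt hε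
  have h1 := le_div_add_one_div_succ hL hnonneg hzero hadd hsymm hx n
  have h2 := le_div_add_one_div_succ hL hnonneg hzero hadd hsymm hLx n
  have h3 := hsymm x hx
  rw [sub_div, div_self hL.ne'] at h2
  rw [Real.dist_eq, abs_le]
  constructor <;> linarith

end Additive

variable {E : Type*} [NormedAddCommGroup E] [InnerProductSpace ℝ E]

section Rotation

noncomputable def circleVec (u e : E) (α : ℝ) : E := cos α • u + sin α • e

/-- The rotation by `α` of the plane spanned by `u` and `e`, extended by the identity. -/
noncomputable def planeRotationMap (u e : E) (α : ℝ) : E →ₗ[ℝ] E where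
  toFun x := x + (cos α - 1) • (⟪x, u⟫ • u + ⟪x, e⟫ • e) + sin α • (⟪x, u⟫ • e - ⟪x, e⟫ • u)
  map_add' x y := by
    simp only [inner_add_left]
    module
  map_smul' c x := by
    simp only [real_inner_smul_left, RingHom.id_apply]
    module

@[simp] theorem circleVec_zero (u e : E) : circleVec u e 0 = u := by simp [circleVec]

theorem circleVec_pi_div_two (u e : E) : circleVec u e (π / 2) = e := by simp [circleVec]

theorem circleVec_pi (u e : E) : circleVec u e π = -u := by simp [circleVec]

variable {u e : E} (hu : ‖u‖ = 1) (he : ‖e‖ = 1) (hue : ⟪u, e⟫ = 0)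
include hu he hue

private theorem inner_orthonormal_pair : ⟪u, u⟫ = 1 ∧ ⟪e, e⟫ = 1 ∧ ⟪e, u⟫ = 0 := by
  simp [hu, he, real_inner_comm u e ▸ hue]

theorem inner_circleVec (a b : ℝ) : ⟪circleVec u e a, circleVec u e b⟫ = cos (a - b) := by
  obtain ⟨huu, hee, heu⟩ := inner_orthonormal_pair hu he hue
  simp only [circleVec, inner_add_left, inner_add_right, real_inner_smul_left,
    real_inner_smul_right, huu, hee, hue, heu, cos_sub]
  ring

theorem planeRotationMap_circleVec (α β : ℝ) :
    planeRotationMap u e α (circleVec u e β) = circleVec u e (α + β) := by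
  obtain ⟨huu, hee, heu⟩ := inner_orthonormal_pair hu he hue
  simp only [planeRotationMap, LinearMap.coe_mk, AddHom.coe_mk, circleVec, inner_add_left,
    real_inner_smul_left, huu, hee, hue, heu, cos_add, sin_add]
  module

theorem norm_planeRotationMap (α : ℝ) (x : E) : ‖planeRotationMap u e α x‖ = ‖x‖ := by
  obtain ⟨huu, hee, heu⟩ := inner_orthonormal_pair hu he hue
  have key : ⟪planeRotationMap u e α x, planeRotationMap u e α x⟫ = ⟪x, x⟫ := by
    simp only [planeRotationMap, LinearMap.coe_mk, AddHom.coe_mk, inner_add_left, inner_add_right,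
      inner_sub_left, inner_sub_right, real_inner_smul_left, real_inner_smul_right,
      huu, hee, hue, heu]
    rw [real_inner_comm x u, real_inner_comm x e]
    linear_combination (⟪x, u⟫ ^ 2 + ⟪x, e⟫ ^ 2) * sin_sq_add_cos_sq α
  rw [real_inner_self_eq_norm_sq, real_inner_self_eq_norm_sq] at key
  exact (pow_left_inj₀ (norm_nonneg _) (norm_nonneg _) two_ne_zero).mp key

variable [FiniteDimensional ℝ E]

noncomputable def planeRotation (α : ℝ) : E ≃ₗᵢ[ℝ] E :=
  LinearIsometry.toLinearIsometryEquiv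
    { toLinearMap := planeRotationMap u e α, norm_map' := norm_planeRotationMap hu he hue α } rfl

theorem planeRotation_circleVec (α β : ℝ) :
    planeRotation hu he hue α (circleVec u e β) = circleVec u e (α + β) :=
  planeRotationMap_circleVec hu he hue α β

theorem planeRotation_apply_left (α : ℝ) : planeRotation hu he hue α u = circleVec u e α := by
  simpa using planeRotation_circleVec hu he hue α 0

theorem planeRotation_apply_right (α : ℝ) :
    planeRotation hu he hue α e = circleVec u e (α + π / 2) := by
  simpa [circleVec_pi_div_two] using planeRotation_circleVec hu he hue α (π / 2)

end Rotation

section Separating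

def separating (a b : E) : Set E := {x | sgn ⟪x, a⟫ ≠ sgn ⟪x, b⟫}

theorem sgn_eq_sgn_iff (s t : ℝ) : sgn s = sgn t ↔ (0 ≤ s ↔ 0 ≤ t) := by
  unfold sgn
  split_ifs <;> norm_num <;> tauto

theorem mem_separating {a b x : E} : x ∈ separating a b ↔ ¬(0 ≤ ⟪x, a⟫ ↔ 0 ≤ ⟪x, b⟫) := by
  simp only [separating, Set.mem_ofPred_eq, ne_eq, sgn_eq_sgn_iff]

theorem separating_self (a : E) : separating a a = ∅ := by
  ext x
  simp [mem_separating]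

theorem separating_smul_smul {c d : ℝ} (hc : 0 < c) (hd : 0 < d) (a b : E) :
    separating (c • a) (d • b) = separating a b := by
  ext x
  simp only [mem_separating, real_inner_smul_right, mul_nonneg_iff_of_pos_left hc,
    mul_nonneg_iff_of_pos_left hd]

theorem preimage_separating (O : E ≃ₗᵢ[ℝ] E) (a b : E) :
    O ⁻¹' separating (O a) (O b) = separating a b := by
  ext x
  simp only [Set.mem_preimage, mem_separating, LinearIsometryEquiv.inner_map_map]

theorem separating_eq_union_of_smul_eq {a b c : E} {s p q : ℝ} (hs : 0 < s) (hp : 0 < p)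
    (hq : 0 < q) (hb : s • b = p • a + q • c) :
    separating a c = separating a b ∪ separating b c ∧
      Disjoint (separating a b) (separating b c) := by
  have key (x : E) : s * ⟪x, b⟫ = p * ⟪x, a⟫ + q * ⟪x, c⟫ := by
    rw [← real_inner_smul_right, hb, inner_add_right, real_inner_smul_right,
      real_inner_smul_right]
  have pos (x : E) : 0 ≤ ⟪x, a⟫ → 0 ≤ ⟪x, c⟫ → 0 ≤ ⟪x, b⟫ := fun ha hc => by
    nlinarith [key x]
  have neg (x : E) : ¬0 ≤ ⟪x, a⟫ → ¬0 ≤ ⟪x, c⟫ → ¬0 ≤ ⟪x, b⟫ := fun ha hc hb => by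
    nlinarith [key x]
  refine ⟨Set.ext fun x => ?_, Set.disjoint_left.mpr fun x => ?_⟩
  all_goals
    simp only [Set.mem_union, mem_separating]
    have := pos x
    have := neg x
    tauto

end Separating

section Measure

variable [MeasurableSpace E] [BorelSpace E] {μ : Measure E}

theorem measurableSet_separating (a b : E) : MeasurableSet (separating a b) := by
  have hsgn : Measurable sgn := Measurable.ite measurableSet_Ici measurable_const measurable_const
  have hinner (c : E) : Measurable fun x : E => ⟪x, c⟫ :=
    (continuous_id.inner continuous_const).measurable
  exact (measurableSet_eq_fun (hsgn.comp (hinner a)) (hsgn.comp (hinner b))).compl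

theorem measure_preimage_linearIsometryEquiv {O : E ≃ₗᵢ[ℝ] E} (hO : μ.map O = μ) (s : Set E) :
    μ (O ⁻¹' s) = μ s :=
  (⟨O.toMeasurableEquiv.measurable, hO⟩ : MeasurePreserving O.toMeasurableEquiv μ μ)
    |>.measure_preimage_equiv s

theorem measureReal_separating_map {O : E ≃ₗᵢ[ℝ] E} (hO : μ.map O = μ) (a b : E) :
    μ.real (separating (O a) (O b)) = μ.real (separating a b) := by
  rw [← preimage_separating O a b, measureReal_def, measureReal_def,
    measure_preimage_linearIsometryEquiv hO]

theorem measureReal_separating_add_measureReal_separating_neg [IsProbabilityMeasure μ] {a : E}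
    (ha : μ {x | ⟪x, a⟫ = 0} = 0) (b : E) :
    μ.real (separating a b) + μ.real (separating b (-a)) = 1 := by
  have hae : (separating b (-a) : Set E) =ᵐ[μ] ((separating a b)ᶜ : Set E) := by
    rw [Filter.eventuallyEq_set]
    filter_upwards [measure_eq_zero_iff_ae_notMem.mp ha] with x (hx : ⟪x, a⟫ ≠ 0)
    simp only [Set.mem_compl_iff, mem_separating, inner_neg_right, neg_nonneg]
    constructor <;> intro h <;> rcases lt_or_gt_of_ne hx with hx | hx <;>
      simp_all [hx.le, not_le.mpr hx]
  rw [measureReal_congr hae, measureReal_add_measureReal_compl (measurableSet_separating a b),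
    probReal_univ]

theorem measure_eq_zero_of_pairwise_aedisjoint {α : Type*} [MeasurableSpace α] {ν : Measure α}
    [IsFiniteMeasure ν] {s : ℕ → Set α} (hd : Pairwise (Function.onFun (AEDisjoint ν) s))
    (hs : ∀ n, NullMeasurableSet (s n) ν) {c : ENNReal} (hc : ∀ n, ν (s n) = c) : c = 0 := by
  by_contra hc0
  have := measure_iUnion₀ hd hs
  simp only [hc, ENNReal.tsum_const_eq_top_of_ne_zero hc0] at this
  exact measure_ne_top ν _ this

end Measure

section Subspace

theorem exists_mem_norm_eq_one_of_ne_bot {V : Submodule ℝ E} (hV : V ≠ ⊥) : ∃ u ∈ V, ‖u‖ = 1 := by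
  obtain ⟨v, hvV, hv⟩ := Submodule.exists_mem_ne_zero_of_ne_bot hV
  exact ⟨‖v‖⁻¹ • v, V.smul_mem _ hvV, norm_smul_inv_norm hv⟩

variable [FiniteDimensional ℝ E]

theorem map_planeRotation_ne {u e : E} (hu : ‖u‖ = 1) (he : ‖e‖ = 1) (hue : ⟪u, e⟫ = 0)
    {V : Submodule ℝ E} (huV : u ∈ V) (heV : e ∈ Vᗮ) {α β : ℝ} (hαβ : sin (α - β) ≠ 0) :
    V.map (planeRotation hu he hue α).toLinearEquiv.toLinearMap ≠
      V.map (planeRotation hu he hue β).toLinearEquiv.toLinearMap := by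
  intro hVαβ
  obtain ⟨w, hwV, hw⟩ := Submodule.mem_map.mp (hVαβ ▸ Submodule.mem_map_of_mem huV :
    planeRotation hu he hue α u ∈ V.map (planeRotation hu he hue β).toLinearEquiv.toLinearMap)
  -- the rotated copy of `V` is orthogonal to the rotated `e`
  have horth : ⟪planeRotation hu he hue α u, planeRotation hu he hue β e⟫ = 0 := by
    rw [← hw, LinearEquiv.coe_toLinearMap, LinearIsometryEquiv.coe_toLinearEquiv,
      LinearIsometryEquiv.inner_map_map, Submodule.inner_right_of_mem_orthogonal hwV heV]
  rw [planeRotation_apply_left, planeRotation_apply_right, inner_circleVec hu he hue,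
    sub_add_eq_sub_sub, cos_sub_pi_div_two] at horth
  exact hαβ horth

variable [MeasurableSpace E] [BorelSpace E] {μ : Measure E}

theorem measure_submodule_eq_zero [IsFiniteMeasure μ] (hrot : ∀ O : E ≃ₗᵢ[ℝ] E, μ.map O = μ)
    (h0 : μ {0} = 0) (V : Submodule ℝ E) (hV : V ≠ ⊤) : μ V = 0 := by
  induction hn : Module.finrank ℝ V using Nat.strong_induction_on generalizing V with
  | _ n ih =>
  rcases eq_or_ne V ⊥ with rfl | hV0
  · simpa using h0
  obtain ⟨u, huV, hu⟩ := exists_mem_norm_eq_one_of_ne_bot hV0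
  obtain ⟨e, heV, he⟩ :=
    exists_mem_norm_eq_one_of_ne_bot (Submodule.orthogonal_eq_bot_iff.not.mpr hV)
  have hue : ⟪u, e⟫ = 0 := Submodule.inner_right_of_mem_orthogonal huV heV
  set α : ℕ → ℝ := fun i => π / (i + 2)
  set W : ℕ → Submodule ℝ E :=
    fun i => V.map (planeRotation hu he hue (α i)).toLinearEquiv.toLinearMap
  have hW_finrank (i : ℕ) : Module.finrank ℝ (W i) = n := hn ▸ LinearEquiv.finrank_map_eq _ V
  have hW_measure (i : ℕ) : μ (W i) = μ V := by
    rw [Submodule.map_coe, LinearEquiv.coe_toLinearMap, LinearEquiv.image_eq_preimage_symm]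
    exact measure_preimage_linearIsometryEquiv (hrot (planeRotation hu he hue (α i)).symm) V
  have hW_ne {i j : ℕ} (hij : i ≠ j) : W i ≠ W j := by
    have hα_mem (i : ℕ) : 0 < α i ∧ α i < π :=
      ⟨by positivity, div_lt_self pi_pos (by linarith [i.cast_nonneg (α := ℝ)])⟩
    refine map_planeRotation_ne hu he hue huV heV fun hsin => hij (Nat.cast_injective (R := ℝ) ?_)
    rw [sin_eq_zero_iff_of_lt_of_lt (by linarith [hα_mem i, hα_mem j])
      (by linarith [hα_mem i, hα_mem j]), sub_eq_zero] at hsin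
    have hαij : π / (i + 2) = π / (j + 2) := hsin
    field_simp at hαij
    linarith [pi_pos]
  have hW_inter {i j : ℕ} (hij : i ≠ j) : μ (W i ∩ W j : Set E) = 0 := by
    have hlt : W i ⊓ W j < W i := by
      refine inf_le_left.lt_of_ne fun h => hW_ne hij ?_
      exact Submodule.eq_of_le_of_finrank_eq (inf_eq_left.mp h)
        ((hW_finrank i).trans (hW_finrank j).symm)
    rw [← Submodule.coe_inf]
    exact ih _ (hW_finrank i ▸ Submodule.finrank_lt_finrank_of_lt hlt) _ (ne_top_of_lt hlt) rfl
  exact measure_eq_zero_of_pairwise_aedisjoint (fun i j hij => hW_inter hij)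
    (fun i => (Submodule.closed_of_finiteDimensional _).measurableSet.nullMeasurableSet)
    hW_measure

end Subspace

section Angle

theorem exists_circleVec_eq_of_two_le_finrank [FiniteDimensional ℝ E]
    (hE : 2 ≤ Module.finrank ℝ E) {u v : E} (hu : ‖u‖ = 1) (hv : ‖v‖ = 1) :
    ∃ e, ‖e‖ = 1 ∧ ⟪u, e⟫ = 0 ∧ v = circleVec u e (angle u v) := by
  set w := v - ⟪u, v⟫ • u with hw_def
  have huu : ⟪u, u⟫ = 1 := by simp [hu]
  have hvv : ⟪v, v⟫ = 1 := by simp [hv]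
  have huw : ⟪u, w⟫ = 0 := by simp [w, inner_sub_right, real_inner_smul_right, hu]
  have hcos : cos (angle u v) = ⟪u, v⟫ := by simp [cos_angle, hu, hv]
  have hw : ‖w‖ = sin (angle u v) := by
    refine (pow_left_inj₀ (norm_nonneg _) (sin_angle_nonneg u v) two_ne_zero).mp ?_
    rw [← real_inner_self_eq_norm_sq, sin_sq, hcos]
    simp only [w, inner_sub_left, inner_sub_right, real_inner_smul_left, real_inner_smul_right,
      huu, hvv, real_inner_comm u v]
    ring
  -- when `v = ± u`, any unit vector orthogonal to `u` will do
  obtain ⟨e, he, hue, hwe⟩ : ∃ e, ‖e‖ = 1 ∧ ⟪u, e⟫ = 0 ∧ w = ‖w‖ • e := by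
    by_cases hw0 : w = 0
    · have hspan : (ℝ ∙ u) ≠ ⊤ := fun h => by
        have := finrank_span_singleton (K := ℝ) (norm_ne_zero_iff.mp (hu ▸ one_ne_zero))
        rw [h, finrank_top] at this
        omega
      obtain ⟨e, he_mem, he⟩ :=
        exists_mem_norm_eq_one_of_ne_bot (Submodule.orthogonal_eq_bot_iff.not.mpr hspan)
      exact ⟨e, he, Submodule.mem_orthogonal_singleton_iff_inner_right.mp he_mem, by simp [hw0]⟩
    · refine ⟨‖w‖⁻¹ • w, norm_smul_inv_norm hw0, by simp [real_inner_smul_right, huw], ?_⟩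
      rw [smul_smul, mul_inv_cancel₀ (norm_ne_zero_iff.mpr hw0), one_smul]
  refine ⟨e, he, hue, ?_⟩
  rw [circleVec, hcos, ← hw, ← hwe, hw_def, add_sub_cancel]

variable [FiniteDimensional ℝ E] [MeasurableSpace E] [BorelSpace E] {μ : Measure E}
  [IsProbabilityMeasure μ]

theorem measure_inner_eq_zero (hrot : ∀ O : E ≃ₗᵢ[ℝ] E, μ.map O = μ) (h0 : μ {0} = 0)
    {a : E} (ha : a ≠ 0) : μ {x | ⟪x, a⟫ = 0} = 0 := by
  have hset : {x | ⟪x, a⟫ = 0} = ((ℝ ∙ a)ᗮ : Submodule ℝ E) := by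
    ext x
    simp [Submodule.mem_orthogonal_singleton_iff_inner_right, real_inner_comm]
  rw [hset]
  refine measure_submodule_eq_zero hrot h0 _ fun htop => ha ?_
  have : a ∈ (ℝ ∙ a)ᗮ := htop ▸ Submodule.mem_top
  simpa using Submodule.mem_orthogonal_singleton_iff_inner_right.mp this

theorem measureReal_separating_circleVec (hrot : ∀ O : E ≃ₗᵢ[ℝ] E, μ.map O = μ)
    (h0 : μ {0} = 0) {u e : E} (hu : ‖u‖ = 1) (he : ‖e‖ = 1) (hue : ⟪u, e⟫ = 0) {θ : ℝ}
    (hθ : θ ∈ Set.Icc 0 π) : μ.real (separating u (circleVec u e θ)) = θ / π := by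
  have hshift (α β : ℝ) : μ.real (separating (circleVec u e α) (circleVec u e (α + β))) =
      μ.real (separating u (circleVec u e β)) := by
    rw [← planeRotation_apply_left hu he hue, ← planeRotation_circleVec hu he hue,
      measureReal_separating_map (hrot _)]
  refine eq_div_of_additive_of_add_sub_eq_one pi_pos
    (f := fun α => μ.real (separating u (circleVec u e α))) (fun _ _ => measureReal_nonneg)
    (by simp [separating_self]) (fun x y hx hy hxy => ?_) (fun x _ => ?_) hθ
  · have hcone : sin (x + y) • circleVec u e x = sin y • u + sin x • circleVec u e (x + y) := by
      simp only [circleVec, smul_add, smul_smul]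
      match_scalars
      · have := sin_sub (x + y) x
        rw [add_sub_cancel_left] at this
        linear_combination -this
      · ring
    obtain ⟨hunion, hdisj⟩ := separating_eq_union_of_smul_eq
      (sin_pos_of_pos_of_lt_pi (by linarith) hxy) (sin_pos_of_pos_of_lt_pi hy (by linarith))
      (sin_pos_of_pos_of_lt_pi hx (by linarith)) hcone
    rw [hunion, measureReal_union hdisj (measurableSet_separating _ _), hshift]
  · have hu0 : u ≠ 0 := norm_ne_zero_iff.mp (hu ▸ one_ne_zero)
    have := measureReal_separating_add_measureReal_separating_neg
      (measure_inner_eq_zero hrot h0 hu0) (circleVec u e x)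
    rwa [← circleVec_pi u e, show π = x + (π - x) by ring, hshift] at this

theorem measure_separating (hrot : ∀ O : E ≃ₗᵢ[ℝ] E, μ.map O = μ) (h0 : μ {0} = 0)
    (hE : 2 ≤ Module.finrank ℝ E) {a b : E} (ha : a ≠ 0) (hb : b ≠ 0) :
    μ (separating a b) = ENNReal.ofReal (angle a b / π) := by
  have ha' : 0 < ‖a‖⁻¹ := inv_pos.mpr (norm_pos_iff.mpr ha)
  have hb' : 0 < ‖b‖⁻¹ := inv_pos.mpr (norm_pos_iff.mpr hb)
  have hnorm {c : E} (hc : c ≠ 0) : ‖‖c‖⁻¹ • c‖ = 1 := norm_smul_inv_norm (𝕜 := ℝ) hc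
  obtain ⟨e, he, hue, hv⟩ := exists_circleVec_eq_of_two_le_finrank hE (hnorm ha) (hnorm hb)
  rw [angle_smul_left_of_pos _ _ ha', angle_smul_right_of_pos _ _ hb'] at hv
  rw [← separating_smul_smul ha' hb', ← ofReal_measureReal, hv,
    measureReal_separating_circleVec hrot h0 (hnorm ha) he hue
      ⟨angle_nonneg a b, angle_le_pi a b⟩]

end Angle

end RandomHyperplane

open RandomHyperplane

/-- Random hyperplane hashing: for `x` uniform (rotation-invariant probability
measure supported on the unit sphere) in `ℝ^d`, `d ≥ 2`, the probability that
`sgn ⟪x, wₘ⟫ = sgn ⟪x, wₙ⟫` equals `1 - θ/π` where `θ` is the angle between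
the nonzero vectors `wₘ` and `wₙ`. -/
theorem lsh_collision_prob
    (d : ℕ) (hd : 2 ≤ d)
    (wm wn : EuclideanSpace ℝ (Fin d)) (hwm : wm ≠ 0) (hwn : wn ≠ 0)
    (μ : Measure (EuclideanSpace ℝ (Fin d))) [IsProbabilityMeasure μ]
    (hsupp : μ (Metric.sphere (0 : EuclideanSpace ℝ (Fin d)) 1) = 1)
    (hrot : ∀ O : EuclideanSpace ℝ (Fin d) ≃ₗᵢ[ℝ] EuclideanSpace ℝ (Fin d),
      Measure.map O μ = μ)
    (θ : ℝ) (hθ : θ = Real.arccos ((inner ℝ wm wn : ℝ) / (‖wm‖ * ‖wn‖))) :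
    μ {x | sgn (inner ℝ x wm : ℝ) = sgn (inner ℝ x wn : ℝ)}
      = ENNReal.ofReal (1 - θ / π) := by
  have hdim : 2 ≤ Module.finrank ℝ (EuclideanSpace ℝ (Fin d)) := by simpa using hd
  have h0 : μ {0} = 0 := measure_mono_null (by simp)
    ((prob_compl_eq_zero_iff Metric.isClosed_sphere.measurableSet).mpr hsupp)
  have hagree : {x | sgn (inner ℝ x wm : ℝ) = sgn (inner ℝ x wn : ℝ)} = (separating wm wn)ᶜ := by
    ext x
    simp [separating]
  have hθ' : θ = angle wm wn := hθ
  rw [hagree, prob_compl_eq_one_sub (measurableSet_separating wm wn),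
    measure_separating hrot h0 hdim hwm hwn, ← hθ',
    ENNReal.ofReal_sub _ (div_nonneg (hθ' ▸ angle_nonneg wm wn) pi_pos.le), ENNReal.ofReal_one]
end

section
/- For two nonzero vectors w_m, w_n in R^d with angle θ ∈ [0, π] between them, the expectation E_x[sgn(⟨x, w_m⟩)·sgn(⟨x, w_n⟩)], where x is uniform on the unit sphere in R^d, equals 1 − 2θ/π. -/
open MeasureTheory Real

/-!
Write `A(a, b)` for the set of `x` with `sgn ⟪x, a⟫ ≠ sgn ⟪x, b⟫`. The integrand is
`1 - 2 • 𝟙_A`, so the claim is `μ A(wₘ, wₙ) = θ / π`. Rotation invariance first makes every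
hyperplane `μ`-null. For an orthonormal pair `e, f` it then makes
`q t = μ A(e, cos t • e + sin t • f)` depend only on angle differences. Since
`A(a, c) = A(a, b) ∆ A(b, c)`, and `A(a, b) ∩ A(b, c) ⊆ aᗮ` when `b` lies between `a` and `c`,
`q` is additive on `[0, π]`; together with `q ≥ 0` and `q π = 1` (as `A(e, -e)` is the
complement of `eᗮ`), this forces `q t = t / π`.
-/

open Filter InnerProductGeometry
open scoped RealInnerProductSpace symmDiff ENNReal

theorem div_le_of_additive_on_Icc {L : ℝ} (hL : 0 < L) {q : ℝ → ℝ}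
    (hq : ∀ x, 0 ≤ x → x ≤ L → 0 ≤ q x)
    (hadd : ∀ x y, 0 ≤ x → 0 ≤ y → x + y ≤ L → q (x + y) = q x + q y) (hqL : q L = 1)
    {x : ℝ} (hx₀ : 0 ≤ x) (hxL : x ≤ L) : x / L ≤ q x := by
  have hmul : ∀ n : ℕ, ∀ y, 0 ≤ y → n * y ≤ L → q (n * y) = n * q y := by
    intro n
    induction n with
    | zero => intro y _ h; simpa using hadd 0 0 le_rfl le_rfl (by simpa using h)
    | succ n ih =>
      intro y hy h
      push_cast at h ⊢
      rw [add_one_mul] at h ⊢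
      rw [hadd _ _ (by positivity) hy h, ih y hy (by linarith)]
      ring
  have hmono : ∀ y z, 0 ≤ y → y ≤ z → z ≤ L → q y ≤ q z := by
    intro y z hy hyz hz
    have := hadd y (z - y) hy (by linarith) (by linarith)
    rw [add_sub_cancel] at this
    linarith [hq (z - y) (by linarith) (by linarith)]
  have hfloor : ∀ n : ℕ, 0 < n → (⌊x / L * n⌋₊ : ℝ) / n ≤ q x := by
    intro n hn
    have hn' : (0 : ℝ) < n := Nat.cast_pos.2 hn
    have hk : ⌊x / L * n⌋₊ * (L / n) ≤ x := by
      have := Nat.floor_le (by positivity : 0 ≤ x / L * n)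
      calc (⌊x / L * n⌋₊ : ℝ) * (L / n) ≤ x / L * n * (L / n) := by gcongr
        _ = x := by field_simp
    have hunit : q (L / n) = 1 / n := by
      have := hmul n (L / n) (by positivity) (by rw [mul_div_cancel₀ _ hn'.ne'])
      rw [mul_div_cancel₀ _ hn'.ne', hqL] at this
      field_simp
      linarith
    calc (⌊x / L * n⌋₊ : ℝ) / n = ⌊x / L * n⌋₊ * q (L / n) := by rw [hunit]; ring
      _ = q (⌊x / L * n⌋₊ * (L / n)) := (hmul _ _ (by positivity) (hk.trans hxL)).symm
      _ ≤ q x := hmono _ _ (by positivity) hk hxL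
  exact le_of_tendsto
    ((tendsto_nat_floor_mul_div_atTop (by positivity)).comp tendsto_natCast_atTop_atTop)
    (eventually_atTop.2 ⟨1, fun n hn => hfloor n hn⟩)

theorem eq_div_of_additive_on_Icc {L : ℝ} (hL : 0 < L) {q : ℝ → ℝ}
    (hq : ∀ x, 0 ≤ x → x ≤ L → 0 ≤ q x)
    (hadd : ∀ x y, 0 ≤ x → 0 ≤ y → x + y ≤ L → q (x + y) = q x + q y) (hqL : q L = 1)
    {x : ℝ} (hx₀ : 0 ≤ x) (hxL : x ≤ L) : q x = x / L := by
  have hx := div_le_of_additive_on_Icc hL hq hadd hqL hx₀ hxL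
  have hLx := div_le_of_additive_on_Icc hL hq hadd hqL (sub_nonneg.2 hxL) (by linarith)
  have hsum := hadd x (L - x) hx₀ (sub_nonneg.2 hxL) (by linarith)
  rw [add_sub_cancel, hqL] at hsum
  rw [sub_div, div_self hL.ne'] at hLx
  linarith

section Measure

variable {α : Type*} [MeasurableSpace α] {μ : Measure α}

theorem eq_zero_of_pairwise_aedisjoint_of_measure_eq [IsFiniteMeasure μ] {s : ℕ → Set α}
    (hs : ∀ n, NullMeasurableSet (s n) μ) (hd : Pairwise (Function.onFun (AEDisjoint μ) s))
    {c : ℝ≥0∞} (hc : ∀ n, μ (s n) = c) : c = 0 := by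
  by_contra h
  have : ∑' n, μ (s n) = ∞ := by
    simp_rw [hc]
    exact ENNReal.tsum_const_eq_top_of_ne_zero h
  rw [← measure_iUnion₀ hd hs] at this
  exact measure_ne_top μ _ this

theorem measure_symmDiff_of_inter_null {s t : Set α} (ht : NullMeasurableSet t μ)
    (h : μ (s ∩ t) = 0) : μ (s ∆ t) = μ s + μ t := by
  rw [symmDiff_eq_sup_sdiff_inf]
  change μ ((s ∪ t) \ (s ∩ t)) = _
  rw [measure_sdiff_null h]
  exact measure_union₀ ht h

end Measure

section CirclePoint

variable {E : Type*} [NormedAddCommGroup E] [InnerProductSpace ℝ E]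

noncomputable def circlePoint (e f : E) (t : ℝ) : E := cos t • e + sin t • f

variable {e f : E}

@[simp] theorem circlePoint_zero : circlePoint e f 0 = e := by simp [circlePoint]

@[simp] theorem circlePoint_pi : circlePoint e f π = -e := by simp [circlePoint]

theorem inner_circlePoint_right (x : E) (t : ℝ) :
    ⟪x, circlePoint e f t⟫ = cos t * ⟪x, e⟫ + sin t * ⟪x, f⟫ := by
  simp only [circlePoint, inner_add_right, real_inner_smul_right]

theorem sin_add_smul_circlePoint (α β : ℝ) :
    sin (α + β) • circlePoint e f α = sin β • e + sin α • circlePoint e f (α + β) := by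
  simp only [circlePoint, smul_add, smul_smul, sin_add, cos_add]
  match_scalars
  · linear_combination (sin β) * sin_sq_add_cos_sq α
  · ring

theorem inner_circlePoint_circlePoint (he : ‖e‖ = 1) (hf : ‖f‖ = 1) (hef : ⟪e, f⟫ = 0)
    (s t : ℝ) : ⟪circlePoint e f s, circlePoint e f t⟫ = cos (t - s) := by
  have hfe : ⟪f, e⟫ = 0 := by rw [real_inner_comm, hef]
  simp only [circlePoint, inner_add_left, inner_add_right, real_inner_smul_left,
    real_inner_smul_right, real_inner_self_eq_norm_sq, he, hf, hef, hfe, cos_sub]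
  ring

theorem norm_circlePoint (he : ‖e‖ = 1) (hf : ‖f‖ = 1) (hef : ⟪e, f⟫ = 0) (t : ℝ) :
    ‖circlePoint e f t‖ = 1 := by
  rw [norm_eq_sqrt_real_inner, inner_circlePoint_circlePoint he hf hef, sub_self, cos_zero,
    sqrt_one]

theorem reflection_circlePoint (he : ‖e‖ = 1) (hf : ‖f‖ = 1) (hef : ⟪e, f⟫ = 0) (c t : ℝ) :
    (ℝ ∙ circlePoint e f c).reflection (circlePoint e f t) = circlePoint e f (2 * c - t) := by
  rw [Submodule.reflection_singleton_apply, inner_circlePoint_circlePoint he hf hef,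
    norm_circlePoint he hf hef]
  simp only [circlePoint, RCLike.ofReal_real_eq_id, id, one_pow, div_one, smul_add, smul_smul,
    two_mul, cos_sub, sin_sub, cos_add, sin_add]
  match_scalars
  · linear_combination cos t * sin_sq_add_cos_sq c
  · linear_combination sin t * sin_sq_add_cos_sq c

theorem Submodule.reflection_singleton_mem_iff {P : Submodule ℝ E} {w : E} (hw : w ∈ P)
    {x : E} : (ℝ ∙ w).reflection x ∈ P ↔ x ∈ P := by
  rw [Submodule.reflection_singleton_apply, P.sub_mem_iff_right]
  exact P.smul_of_tower_mem _ (P.smul_mem _ hw)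

theorem exists_eq_circlePoint_angle {u v : E} (hu : ‖u‖ = 1) (hv : ‖v‖ = 1)
    (hsin : sin (angle u v) ≠ 0) :
    ∃ w : E, ‖w‖ = 1 ∧ ⟪u, w⟫ = 0 ∧ v = circlePoint u w (angle u v) := by
  set θ := angle u v
  have hcos : cos θ = ⟪u, v⟫ := by rw [cos_angle, hu, hv, mul_one, div_one]
  have hsin_pos : 0 < sin θ := (sin_angle_nonneg u v).lt_of_ne' hsin
  have hnorm : ‖v - cos θ • u‖ = sin θ := by
    refine (pow_left_inj₀ (norm_nonneg _) hsin_pos.le two_ne_zero).1 ?_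
    rw [norm_sub_sq_real, norm_smul, real_inner_smul_right, real_inner_comm, ← hcos, hu, hv,
      Real.norm_eq_abs, mul_one, sq_abs]
    linear_combination -sin_sq_add_cos_sq θ
  refine ⟨(sin θ)⁻¹ • (v - cos θ • u), ?_, ?_, ?_⟩
  · rw [norm_smul, hnorm, norm_inv, Real.norm_eq_abs, abs_of_pos hsin_pos, inv_mul_cancel₀ hsin]
  · rw [real_inner_smul_right, inner_sub_right, real_inner_smul_right, real_inner_self_eq_norm_sq,
      hu, ← hcos]
    ring
  · simp only [circlePoint, smul_smul, mul_inv_cancel₀ hsin, one_smul]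
    abel

end CirclePoint

section SignDisagree

variable {E : Type*} [NormedAddCommGroup E] [InnerProductSpace ℝ E]

def signDisagree (a b : E) : Set E := {x | 0 ≤ ⟪x, a⟫} ∆ {x | 0 ≤ ⟪x, b⟫}

@[simp] theorem signDisagree_self (a : E) : signDisagree a a = ∅ := symmDiff_self _

theorem signDisagree_comm (a b : E) : signDisagree a b = signDisagree b a := symmDiff_comm _ _

theorem signDisagree_symmDiff_signDisagree (a b c : E) :
    signDisagree a b ∆ signDisagree b c = signDisagree a c := by
  simp only [signDisagree, symmDiff_assoc, symmDiff_symmDiff_cancel_left]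

theorem signDisagree_smul_smul {r s : ℝ} (hr : 0 < r) (hs : 0 < s) (a b : E) :
    signDisagree (r • a) (s • b) = signDisagree a b := by
  simp only [signDisagree, real_inner_smul_right, mul_nonneg_iff_of_pos_left hr,
    mul_nonneg_iff_of_pos_left hs]

theorem signDisagree_neg_right (a : E) : signDisagree a (-a) = ((ℝ ∙ a)ᗮ : Set E)ᶜ := by
  ext x
  simp only [signDisagree, Set.mem_symmDiff, Set.mem_ofPred_eq, inner_neg_right, Set.mem_compl_iff,
    SetLike.mem_coe, Submodule.mem_orthogonal_singleton_iff_inner_left]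
  constructor
  · rintro (⟨h1, h2⟩ | ⟨h1, h2⟩) <;> intro h <;> simp_all
  · intro h
    rcases lt_or_gt_of_ne h with h | h
    · exact Or.inr ⟨by linarith, by linarith⟩
    · exact Or.inl ⟨by linarith, by linarith⟩

theorem preimage_signDisagree (O : E ≃ₗᵢ[ℝ] E) (a b : E) :
    O ⁻¹' signDisagree (O a) (O b) = signDisagree a b := by
  simp only [signDisagree, Set.preimage_symmDiff, Set.preimage_ofPred_eq,
    LinearIsometryEquiv.inner_map_map]

theorem signDisagree_inter_subset {a b c : E} {p r s : ℝ} (hp : 0 < p) (hr : 0 < r) (hs : 0 ≤ s)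
    (h : s • b = p • a + r • c) :
    signDisagree a b ∩ signDisagree b c ⊆ ((ℝ ∙ a)ᗮ : Set E) := by
  rintro x ⟨hab, hbc⟩
  have hx := congrArg (⟪x, ·⟫) h
  simp only [inner_add_right, real_inner_smul_right] at hx
  simp only [signDisagree, Set.mem_symmDiff, Set.mem_ofPred_eq, not_le] at hab hbc
  rw [SetLike.mem_coe, Submodule.mem_orthogonal_singleton_iff_inner_left]
  rcases hab with ⟨ha, hb⟩ | ⟨hb, ha⟩ <;> rcases hbc with ⟨hb', hc⟩ | ⟨hc, hb'⟩
  · linarith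
  · nlinarith [mul_nonpos_of_nonneg_of_nonpos hs hb.le, mul_nonneg hr.le hc]
  · linarith [mul_nonneg hs hb, mul_neg_of_pos_of_neg hp ha, mul_neg_of_pos_of_neg hr hc]
  · linarith

theorem measurableSet_signDisagree [MeasurableSpace E] [OpensMeasurableSpace E] (a b : E) :
    MeasurableSet (signDisagree a b) :=
  (measurableSet_le measurable_const (by fun_prop)).symmDiff
    (measurableSet_le measurable_const (by fun_prop))

theorem sgn_inner_mul_sgn_inner (x a b : E) :
    sgn ⟪x, a⟫ * sgn ⟪x, b⟫ = 1 - 2 * (signDisagree a b).indicator 1 x := by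
  by_cases ha : 0 ≤ ⟪x, a⟫ <;> by_cases hb : 0 ≤ ⟪x, b⟫ <;>
    simp [sgn, signDisagree, Set.indicator, Set.mem_symmDiff, ha, hb] <;> norm_num

theorem integral_sgn_inner_mul_sgn_inner [MeasurableSpace E] [OpensMeasurableSpace E]
    {μ : Measure E} [IsProbabilityMeasure μ] (a b : E) :
    ∫ x, sgn ⟪x, a⟫ * sgn ⟪x, b⟫ ∂μ = 1 - 2 * μ.real (signDisagree a b) := by
  have hmeas := measurableSet_signDisagree a b
  simp_rw [sgn_inner_mul_sgn_inner]
  rw [integral_sub (integrable_const _) (((integrable_const 1).indicator hmeas).const_mul 2),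
    integral_const_mul, integral_indicator_one hmeas]
  simp

end SignDisagree

section RotationInvariant

variable {E : Type*} [NormedAddCommGroup E] [InnerProductSpace ℝ E] [MeasurableSpace E]
  [BorelSpace E] {μ : Measure E}

def IsRotationInvariant (μ : Measure E) : Prop := ∀ O : E ≃ₗᵢ[ℝ] E, Measure.map O μ = μ

theorem measure_preimage_linearIsometryEquiv
    (hrot : IsRotationInvariant μ) (O : E ≃ₗᵢ[ℝ] E) (s : Set E) :
    μ (O ⁻¹' s) = μ s :=
  MeasurePreserving.measure_preimage_equiv (f := O.toHomeomorph.toMeasurableEquiv)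
    ⟨O.continuous.measurable, hrot O⟩ s

theorem measure_signDisagree_map (hrot : IsRotationInvariant μ)
    (O : E ≃ₗᵢ[ℝ] E) (a b : E) : μ (signDisagree (O a) (O b)) = μ (signDisagree a b) := by
  rw [← measure_preimage_linearIsometryEquiv hrot O, preimage_signDisagree]

theorem measure_signDisagree_circlePoint_circlePoint
    (hrot : IsRotationInvariant μ) {e f : E} (he : ‖e‖ = 1) (hf : ‖f‖ = 1)
    (hef : ⟪e, f⟫ = 0) (α γ : ℝ) :
    μ (signDisagree (circlePoint e f α) (circlePoint e f γ)) =
      μ (signDisagree e (circlePoint e f (γ - α))) := by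
  set R := (ℝ ∙ circlePoint e f (γ / 2)).reflection
  have h1 : R (circlePoint e f (γ - α)) = circlePoint e f α := by
    rw [reflection_circlePoint he hf hef]
    ring_nf
  have h2 : R e = circlePoint e f γ := by
    simpa [mul_div_cancel₀] using reflection_circlePoint he hf hef (γ / 2) 0
  rw [signDisagree_comm e, ← h1, ← h2, measure_signDisagree_map hrot]

/-- The copies of `P ⊓ eᗮ` rotated in the plane of `e, f` all have the same measure and pairwise
meet inside `P ⊓ eᗮ ⊓ fᗮ`; a finite measure leaves no room for infinitely many such sets of
positive measure. -/
theorem measure_inf_orthogonal_eq_zero [IsFiniteMeasure μ]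
    (hrot : IsRotationInvariant μ) {P : Submodule ℝ E}
    (hP : IsClosed (P : Set E)) {e f : E} (he : ‖e‖ = 1) (hf : ‖f‖ = 1) (hef : ⟪e, f⟫ = 0)
    (heP : e ∈ P) (hfP : f ∈ P) (h : μ (P ⊓ (ℝ ∙ e)ᗮ ⊓ (ℝ ∙ f)ᗮ : Submodule ℝ E) = 0) :
    μ (P ⊓ (ℝ ∙ e)ᗮ : Submodule ℝ E) = 0 := by
  have hcP (t : ℝ) : circlePoint e f t ∈ P := P.add_mem (P.smul_mem _ heP) (P.smul_mem _ hfP)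
  set B : ℝ → Set E := fun t => (P ⊓ (ℝ ∙ circlePoint e f t)ᗮ : Submodule ℝ E) with hB
  have hB_eq (t : ℝ) : μ (B t) = μ (B 0) := by
    rw [← measure_preimage_linearIsometryEquiv hrot (ℝ ∙ circlePoint e f (t / 2)).reflection]
    congr 1
    ext x
    simp only [hB, Set.mem_preimage, SetLike.mem_coe, Submodule.mem_inf,
      Submodule.mem_orthogonal_singleton_iff_inner_left,
      Submodule.reflection_singleton_mem_iff (hcP _), LinearIsometryEquiv.inner_map_eq_flip,
      Submodule.reflection_symm, reflection_circlePoint he hf hef]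
    ring_nf
  have hB_inter (s t : ℝ) (hst : sin (t - s) ≠ 0) :
      B s ∩ B t ⊆ (P ⊓ (ℝ ∙ e)ᗮ ⊓ (ℝ ∙ f)ᗮ : Submodule ℝ E) := by
    rintro x ⟨⟨hxP, hs⟩, -, ht⟩
    simp only [SetLike.mem_coe, Submodule.mem_orthogonal_singleton_iff_inner_left,
      inner_circlePoint_right] at hs ht
    refine ⟨⟨hxP, ?_⟩, ?_⟩ <;>
      rw [SetLike.mem_coe, Submodule.mem_orthogonal_singleton_iff_inner_left] <;>
      refine (mul_eq_zero.1 ?_).resolve_left hst <;> rw [sin_sub]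
    · linear_combination sin t * hs - sin s * ht
    · linear_combination cos s * ht - cos t * hs
  have hB0 : B 0 = (P ⊓ (ℝ ∙ e)ᗮ : Submodule ℝ E) := by simp [hB]
  rw [← hB0]
  refine eq_zero_of_pairwise_aedisjoint_of_measure_eq (s := fun n : ℕ => B (arctan n))
    (fun n => (hP.inter (Submodule.isClosed_orthogonal _)).measurableSet.nullMeasurableSet)
    (fun m n hmn => measure_mono_null (hB_inter _ _ ?_) h) (fun n => hB_eq _)
  have := arctan_lt_pi_div_two n
  have := arctan_lt_pi_div_two m
  have := neg_pi_div_two_lt_arctan n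
  have := neg_pi_div_two_lt_arctan m
  rw [Ne, sin_eq_zero_iff_of_lt_of_lt (by linarith) (by linarith), sub_eq_zero]
  exact fun hnm => hmn (Nat.cast_injective (arctan_injective hnm)).symm

end RotationInvariant

section Hyperplane

variable {E : Type*} [NormedAddCommGroup E] [InnerProductSpace ℝ E] [FiniteDimensional ℝ E]
  [MeasurableSpace E] [BorelSpace E] {μ : Measure E} [IsFiniteMeasure μ]

theorem measure_iInf_orthogonal_basis_eq_zero (hrot : IsRotationInvariant μ)
    (h0 : μ {0} = 0) {ι : Type*} [Fintype ι] (b : OrthonormalBasis ι ℝ E)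
    {s : Finset ι} (hs : s.Nonempty) : μ (⨅ i ∈ s, (ℝ ∙ b i)ᗮ : Submodule ℝ E) = 0 := by
  classical
  refine Finset.strongDownwardInduction (n := Fintype.card ι)
    (p := fun s => s.Nonempty → μ (⨅ i ∈ s, (ℝ ∙ b i)ᗮ : Submodule ℝ E) = 0) ?_ s
    s.card_le_univ hs
  intro s ih _ hs
  by_cases hsu : s = Finset.univ
  · have : (⨅ i ∈ s, (ℝ ∙ b i)ᗮ : Submodule ℝ E) = ⊥ := by
      refine (Submodule.eq_bot_iff _).2 fun x hx => ?_
      simp only [hsu, Finset.mem_univ, Submodule.mem_iInf, forall_const,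
        Submodule.mem_orthogonal_singleton_iff_inner_right] at hx
      rw [← b.sum_repr' x]
      simp [hx]
    rwa [this, Submodule.bot_coe]
  obtain ⟨j, hj⟩ : ∃ j, j ∉ s := by simpa [Finset.eq_univ_iff_forall] using hsu
  obtain ⟨i, hi⟩ := hs
  have hij : i ≠ j := ne_of_mem_of_not_mem hi hj
  have hnext := ih (Finset.card_le_univ _) (Finset.ssubset_insert hj) (Finset.insert_nonempty _ _)
  set P := ⨅ k ∈ s.erase i, (ℝ ∙ b k)ᗮ
  have hs_eq : ⨅ k ∈ s, (ℝ ∙ b k)ᗮ = P ⊓ (ℝ ∙ b i)ᗮ := by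
    conv_lhs => rw [← Finset.insert_erase hi, Finset.iInf_insert]
    exact inf_comm _ _
  rw [Finset.iInf_insert, hs_eq, inf_comm] at hnext
  have hmem {k : ι} (hk : k ∉ s.erase i) : b k ∈ P := by
    simp only [P, Submodule.mem_iInf, Submodule.mem_orthogonal_singleton_iff_inner_right]
    exact fun l hl => b.orthonormal.2 (ne_of_mem_of_not_mem hl hk)
  rw [hs_eq]
  exact measure_inf_orthogonal_eq_zero hrot (Submodule.closed_of_finiteDimensional _)
    (b.orthonormal.1 i) (b.orthonormal.1 j) (b.orthonormal.2 hij)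
    (hmem (Finset.notMem_erase i s)) (hmem fun h => hj (Finset.mem_of_mem_erase h)) hnext

theorem measure_orthogonal_singleton_eq_zero (hrot : IsRotationInvariant μ)
    (h0 : μ {0} = 0) {v : E} (hv : v ≠ 0) : μ (ℝ ∙ v)ᗮ = 0 := by
  classical
  set u := ‖v‖⁻¹ • v
  have hu : Orthonormal ℝ ((↑) : ({u} : Set E) → E) := by
    simp [u, norm_smul, hv]
  obtain ⟨U, b, hU, hb⟩ := hu.exists_orthonormalBasis_extension
  have := measure_iInf_orthogonal_basis_eq_zero hrot h0 b (s := {⟨u, hU rfl⟩})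
    (Finset.singleton_nonempty _)
  rwa [Finset.iInf_singleton, hb, Submodule.span_singleton_smul_eq] at this
  exact (inv_pos.2 (norm_pos_iff.2 hv)).ne'.isUnit

end Hyperplane

section Angle

variable {E : Type*} [NormedAddCommGroup E] [InnerProductSpace ℝ E] [FiniteDimensional ℝ E]
  [MeasurableSpace E] [BorelSpace E] {μ : Measure E}

theorem measure_signDisagree_neg_right [IsProbabilityMeasure μ]
    (hrot : IsRotationInvariant μ) (h0 : μ {0} = 0) {a : E} (ha : a ≠ 0) :
    μ (signDisagree a (-a)) = 1 := by
  rw [signDisagree_neg_right,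
    prob_compl_eq_one_iff (Submodule.isClosed_orthogonal _).measurableSet]
  exact measure_orthogonal_singleton_eq_zero hrot h0 ha

variable {e f : E}

theorem measureReal_signDisagree_circlePoint_add [IsFiniteMeasure μ]
    (hrot : IsRotationInvariant μ) (h0 : μ {0} = 0) (he : ‖e‖ = 1)
    (hf : ‖f‖ = 1) (hef : ⟪e, f⟫ = 0) {α β : ℝ} (hα : 0 ≤ α) (hβ : 0 ≤ β) (hαβ : α + β ≤ π) :
    μ.real (signDisagree e (circlePoint e f (α + β))) =
      μ.real (signDisagree e (circlePoint e f α)) +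
        μ.real (signDisagree e (circlePoint e f β)) := by
  rcases hα.eq_or_lt with rfl | hα
  · simp
  rcases hβ.eq_or_lt with rfl | hβ
  · simp
  have hnull : μ (signDisagree e (circlePoint e f α) ∩
      signDisagree (circlePoint e f α) (circlePoint e f (α + β))) = 0 :=
    measure_mono_null
      (signDisagree_inter_subset (sin_pos_of_pos_of_lt_pi hβ (by linarith))
        (sin_pos_of_pos_of_lt_pi hα (by linarith))
        (sin_nonneg_of_nonneg_of_le_pi (by linarith) hαβ)
        (sin_add_smul_circlePoint α β))
      (measure_orthogonal_singleton_eq_zero hrot h0 (norm_ne_zero_iff.1 (by simp [he])))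
  have hadd :=
    measure_symmDiff_of_inter_null (measurableSet_signDisagree _ _).nullMeasurableSet hnull
  rw [signDisagree_symmDiff_signDisagree,
    measure_signDisagree_circlePoint_circlePoint hrot he hf hef, add_sub_cancel_left] at hadd
  simp only [measureReal_def, hadd, ENNReal.toReal_add (measure_ne_top _ _) (measure_ne_top _ _)]

theorem measureReal_signDisagree_circlePoint [IsProbabilityMeasure μ]
    (hrot : IsRotationInvariant μ) (h0 : μ {0} = 0) (he : ‖e‖ = 1)
    (hf : ‖f‖ = 1) (hef : ⟪e, f⟫ = 0) {θ : ℝ} (hθ₀ : 0 ≤ θ) (hθπ : θ ≤ π) :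
    μ.real (signDisagree e (circlePoint e f θ)) = θ / π :=
  eq_div_of_additive_on_Icc pi_pos (q := fun t => μ.real (signDisagree e (circlePoint e f t)))
    (fun _ _ _ => measureReal_nonneg)
    (fun _ _ => measureReal_signDisagree_circlePoint_add hrot h0 he hf hef)
    (by simp [measureReal_def,
      measure_signDisagree_neg_right hrot h0 (a := e) (by simp [← norm_ne_zero_iff, he])])
    hθ₀ hθπ

theorem measureReal_signDisagree [IsProbabilityMeasure μ] (hrot : IsRotationInvariant μ)
    (h0 : μ {0} = 0) {u v : E} (hu : u ≠ 0) (hv : v ≠ 0) :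
    μ.real (signDisagree u v) = angle u v / π := by
  rcases eq_or_ne (sin (angle u v)) 0 with hsin | hsin
  · rcases sin_eq_zero_iff_angle_eq_zero_or_angle_eq_pi.1 hsin with h | h
    · obtain ⟨-, r, hr, rfl⟩ := angle_eq_zero_iff.1 h
      have := signDisagree_smul_smul one_pos hr u u
      rw [one_smul] at this
      simp [this, h]
    · obtain ⟨-, r, hr, rfl⟩ := angle_eq_pi_iff.1 h
      have := signDisagree_smul_smul one_pos (neg_pos.2 hr) u (-u)
      rw [one_smul, neg_smul_neg] at this
      simp [this, h, measureReal_def, measure_signDisagree_neg_right hrot h0 hu, pi_ne_zero]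
  have hnu := inv_pos.2 (norm_pos_iff.2 hu)
  have hnv := inv_pos.2 (norm_pos_iff.2 hv)
  have hangle : angle (‖u‖⁻¹ • u) (‖v‖⁻¹ • v) = angle u v := by
    rw [angle_smul_left_of_pos _ _ hnu, angle_smul_right_of_pos _ _ hnv]
  have hunit {w : E} (hw : w ≠ 0) : ‖‖w‖⁻¹ • w‖ = 1 := by
    rw [norm_smul, norm_inv, norm_norm, inv_mul_cancel₀ (norm_ne_zero_iff.2 hw)]
  obtain ⟨f, hf, huf, hvf⟩ := exists_eq_circlePoint_angle (hunit hu) (hunit hv) (hangle ▸ hsin)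
  rw [← signDisagree_smul_smul hnu hnv, hvf, hangle]
  exact measureReal_signDisagree_circlePoint hrot h0 (hunit hu) hf huf
    (angle_nonneg u v) (angle_le_pi u v)

end Angle

theorem lsh_expectation_general
    (d : ℕ)
    (wm wn : EuclideanSpace ℝ (Fin d)) (hwm : wm ≠ 0) (hwn : wn ≠ 0)
    (μ : Measure (EuclideanSpace ℝ (Fin d))) [IsProbabilityMeasure μ]
    (hsupp : μ (Metric.sphere (0 : EuclideanSpace ℝ (Fin d)) 1) = 1)
    (hrot : ∀ O : EuclideanSpace ℝ (Fin d) ≃ₗᵢ[ℝ] EuclideanSpace ℝ (Fin d),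
      Measure.map O μ = μ)
    (θ : ℝ) (hθ : θ = Real.arccos ((inner ℝ wm wn : ℝ) / (‖wm‖ * ‖wn‖))) :
    ∫ x, sgn (inner ℝ x wm : ℝ) * sgn (inner ℝ x wn : ℝ) ∂μ = 1 - 2 * θ / π := by
  have h0 : μ {0} = 0 :=
    measure_mono_null (by simp : {0} ⊆ (Metric.sphere (0 : EuclideanSpace ℝ (Fin d)) 1)ᶜ)
      ((prob_compl_eq_zero_iff Metric.isClosed_sphere.measurableSet).2 hsupp)
  rw [integral_sgn_inner_mul_sgn_inner, measureReal_signDisagree hrot h0 hwm hwn, hθ,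
    mul_div_assoc]
  rfl

/-- The ϑ-space lemma: `E_x[sgn⟪x,wₘ⟫ · sgn⟪x,wₙ⟫] = 1 - 2θ/π` for `x`
uniform (rotation-invariant probability measure supported on the unit sphere)
in `ℝ^d`, `d ≥ 2`, where `θ` is the angle between the nonzero vectors. -/
theorem lsh_expectation
    (d : ℕ) (hd : 2 ≤ d)
    (wm wn : EuclideanSpace ℝ (Fin d)) (hwm : wm ≠ 0) (hwn : wn ≠ 0)
    (μ : Measure (EuclideanSpace ℝ (Fin d))) [IsProbabilityMeasure μ]
    (hsupp : μ (Metric.sphere (0 : EuclideanSpace ℝ (Fin d)) 1) = 1)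
    (hrot : ∀ O : EuclideanSpace ℝ (Fin d) ≃ₗᵢ[ℝ] EuclideanSpace ℝ (Fin d),
      Measure.map O μ = μ)
    (θ : ℝ) (hθ : θ = Real.arccos ((inner ℝ wm wn : ℝ) / (‖wm‖ * ‖wn‖))) :
    ∫ x, sgn (inner ℝ x wm : ℝ) * sgn (inner ℝ x wn : ℝ) ∂μ = 1 - 2 * θ / π :=
  lsh_expectation_general d wm wn hwm hwn μ hsupp hrot θ hθ
end

section
/- For two nonzero vectors w_m, w_n ∈ R², with x = (cos φ, sin φ) where φ is uniform on [0, 2π), the probability that sgn(⟨x, w_m⟩) ≠ sgn(⟨x, w_n⟩) equals θ/π, where θ ∈ [0, π] is the angle between w_m and w_n. -/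
open MeasureTheory Real

/-!
Write `w = ‖w‖ (cos α, sin α)`, so that `⟪x φ, w⟫ = ‖w‖ cos (φ - α)`. Off the null set where one
of the cosines vanishes, the two signs differ iff `cos (φ - α) cos (φ - β) < 0`, which by the
product-to-sum formula reads `cos (2φ - (α + β)) < -cos (α - β) = cos (π - θ)`. This set is
`π`-periodic and meets each period in an open interval of length `θ`, so it occupies length `2θ`
of `[0, 2π)`.
-/

open Set

lemma sgn_mul_of_pos {r : ℝ} (hr : 0 < r) (u : ℝ) : sgn (r * u) = sgn u := by
  simp only [sgn, mul_nonneg_iff_of_pos_left hr]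

lemma sgn_ne_sgn_iff_mul_neg {u v : ℝ} (hu : u ≠ 0) (hv : v ≠ 0) :
    sgn u ≠ sgn v ↔ u * v < 0 := by
  rw [mul_neg_iff]
  unfold sgn
  split_ifs <;> grind

lemma cos_sub_mul_cos_sub_neg_iff (φ α β : ℝ) :
    cos (φ - α) * cos (φ - β) < 0 ↔ cos (2 * φ - (α + β)) < -cos (α - β) := by
  have h : 2 * (cos (φ - α) * cos (φ - β)) = cos (2 * φ - (α + β)) + cos (α - β) := by
    rw [show 2 * φ - (α + β) = (φ - α) + (φ - β) by ring,
      show α - β = (φ - β) - (φ - α) by ring, cos_add, cos_sub (φ - β)]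
    ring
  constructor <;> intro <;> linarith

lemma ae_cos_sub_ne_zero (α : ℝ) : ∀ᵐ φ : ℝ, cos (φ - α) ≠ 0 := by
  filter_upwards [(countable_range fun k : ℤ => (2 * k + 1) * π / 2 + α).ae_notMem volume]
    with φ hφ hcos
  obtain ⟨k, hk⟩ := cos_eq_zero_iff.mp hcos
  exact hφ ⟨k, by linarith⟩

lemma exists_eq_norm_mul_cos_sin (w : EuclideanSpace ℝ (Fin 2)) :
    ∃ α : ℝ, w 0 = ‖w‖ * cos α ∧ w 1 = ‖w‖ * sin α := by
  set z := Complex.orthonormalBasisOneI.repr.symm w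
  have hz : ‖z‖ = ‖w‖ := LinearIsometryEquiv.norm_map _ _
  refine ⟨z.arg, ?_, ?_⟩
  · rw [← hz, Complex.norm_mul_cos_arg]; simp [z]
  · rw [← hz, Complex.norm_mul_sin_arg]; simp [z]

lemma inner_eq_mul_cos_sub {v w : EuclideanSpace ℝ (Fin 2)} {r s α β : ℝ}
    (hv₀ : v 0 = r * cos α) (hv₁ : v 1 = r * sin α)
    (hw₀ : w 0 = s * cos β) (hw₁ : w 1 = s * sin β) :
    inner ℝ v w = r * s * cos (α - β) := by
  simp only [PiLp.inner_apply, Fin.sum_univ_two, RCLike.inner_apply, conj_trivial]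
  rw [hv₀, hv₁, hw₀, hw₁, cos_sub]
  ring

lemma volume_inter_Ioc_eq_of_periodic {A : Set ℝ} (hA : MeasurableSet A) {T : ℝ} (hT : 0 < T)
    (hper : Function.Periodic (· ∈ A) T) (s t : ℝ) :
    volume (A ∩ Ioc s (s + T)) = volume (A ∩ Ioc t (t + T)) := by
  refine (isAddFundamentalDomain_Ioc hT s).measure_set_eq (isAddFundamentalDomain_Ioc hT t) hA
    fun g => ?_
  obtain ⟨n, hn⟩ := AddSubgroup.mem_zmultiples_iff.mp g.2
  ext x
  change (g : ℝ) + x ∈ A ↔ x ∈ A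
  rw [← hn, add_comm]
  exact (hper.zsmul n x).to_iff

lemma setOf_cos_lt_cos_inter_Ioc {a : ℝ} (ha₀ : 0 ≤ a) (haπ : a ≤ π) :
    {x | cos x < cos a} ∩ Ioc a (a + 2 * π) = Ioo a (2 * π - a) := by
  ext x
  simp only [mem_inter_iff, mem_ofPred_eq, mem_Ioc, mem_Ioo]
  constructor
  · rintro ⟨hcos, hax, hx⟩
    refine ⟨hax, lt_of_not_ge fun hx' => hcos.not_ge ?_⟩
    rw [← cos_sub_two_pi x, ← cos_abs (x - 2 * π)]
    exact cos_le_cos_of_nonneg_of_le_pi (abs_nonneg _) haπ (abs_le.mpr ⟨by linarith, by linarith⟩)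
  · rintro ⟨hax, hx⟩
    refine ⟨?_, hax, by linarith⟩
    rcases le_or_gt x π with hxπ | hxπ
    · exact cos_lt_cos_of_nonneg_of_le_pi ha₀ hxπ hax
    · rw [← cos_two_pi_sub]
      exact cos_lt_cos_of_nonneg_of_le_pi ha₀ (by linarith) (by linarith)

lemma setOf_cos_two_mul_sub_lt_inter_Ioc (γ : ℝ) {a : ℝ} (ha₀ : 0 ≤ a) (haπ : a ≤ π) :
    {φ | cos (2 * φ - γ) < cos a} ∩ Ioc ((a + γ) / 2) ((a + γ) / 2 + π)
      = Ioo ((a + γ) / 2) ((a + γ) / 2 + (π - a)) := by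
  ext φ
  have h := Set.ext_iff.mp (setOf_cos_lt_cos_inter_Ioc ha₀ haπ) (2 * φ - γ)
  simp only [mem_inter_iff, mem_ofPred_eq, mem_Ioc, mem_Ioo] at h ⊢
  constructor
  · rintro ⟨hcos, hl, hr⟩
    have := h.mp ⟨hcos, by linarith, by linarith⟩
    constructor <;> linarith
  · rintro ⟨hl, hr⟩
    exact ⟨(h.mpr ⟨by linarith, by linarith⟩).1, hl, by linarith⟩

lemma volume_setOf_cos_two_mul_sub_lt_inter_Ico (γ : ℝ) {a : ℝ} (ha₀ : 0 ≤ a) (haπ : a ≤ π) :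
    volume ({φ | cos (2 * φ - γ) < cos a} ∩ Ico 0 (2 * π)) = ENNReal.ofReal (2 * (π - a)) := by
  set A := {φ | cos (2 * φ - γ) < cos a}
  have hA : MeasurableSet A := measurableSet_lt (by fun_prop) measurable_const
  have hA_periodic : Function.Periodic (· ∈ A) π := fun φ => by
    simp only [A, mem_ofPred_eq, show 2 * (φ + π) - γ = 2 * φ - γ + 2 * π by ring, cos_add_two_pi]
  have hA_period (s : ℝ) : volume (A ∩ Ioc s (s + π)) = ENNReal.ofReal (π - a) := by
    rw [volume_inter_Ioc_eq_of_periodic hA pi_pos hA_periodic s ((a + γ) / 2),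
      setOf_cos_two_mul_sub_lt_inter_Ioc γ ha₀ haπ, volume_Ioo, add_sub_cancel_left]
  have hsplit : Ioc 0 (2 * π) = Ioc 0 (0 + π) ∪ Ioc π (π + π) := by
    rw [zero_add, Ioc_union_Ioc_eq_Ioc pi_pos.le (by linarith [pi_pos]), ← two_mul]
  rw [measure_congr ((Filter.EventuallyEq.refl _ A).inter Ico_ae_eq_Ioc), hsplit,
    inter_union_distrib_left, measure_union (Disjoint.mono inter_subset_right inter_subset_right
      (Ioc_disjoint_Ioc_of_le (zero_add π).le)) (hA.inter measurableSet_Ioc),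
    hA_period, hA_period, ← ENNReal.ofReal_add (by linarith) (by linarith), two_mul]

/-- Planar case of the random hyperplane hashing lemma: for `φ` uniform on
`[0, 2π)` and `x(φ) = (cos φ, sin φ)`, the probability that the hashes of two
nonzero vectors `wₘ, wₙ ∈ ℝ²` disagree equals `θ/π`, where `θ` is the angle
between them. -/
theorem lsh_planar_case
    (wm wn : EuclideanSpace ℝ (Fin 2)) (hwm : wm ≠ 0) (hwn : wn ≠ 0)
    (θ : ℝ) (hθ : θ = Real.arccos ((inner ℝ wm wn : ℝ) / (‖wm‖ * ‖wn‖)))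
    (P : Measure ℝ)
    (hP : P = (ENNReal.ofReal (2 * π))⁻¹ • volume.restrict (Set.Ico 0 (2 * π)))
    (x : ℝ → EuclideanSpace ℝ (Fin 2))
    (hx : x = fun φ => (WithLp.equiv 2 (Fin 2 → ℝ)).symm ![Real.cos φ, Real.sin φ]) :
    P {φ | sgn (inner ℝ (x φ) wm : ℝ) ≠ sgn (inner ℝ (x φ) wn : ℝ)}
      = ENNReal.ofReal (θ / π) := by
  obtain ⟨α, hα₀, hα₁⟩ := exists_eq_norm_mul_cos_sin wm
  obtain ⟨β, hβ₀, hβ₁⟩ := exists_eq_norm_mul_cos_sin wn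
  have hx₀ (φ : ℝ) : x φ 0 = 1 * cos φ := by simp [hx]
  have hx₁ (φ : ℝ) : x φ 1 = 1 * sin φ := by simp [hx]
  have hm : 0 < ‖wm‖ := norm_pos_iff.mpr hwm
  have hn : 0 < ‖wn‖ := norm_pos_iff.mpr hwn
  have hθ_angle : θ = InnerProductGeometry.angle wm wn := hθ
  have hcos : cos (π - θ) = -cos (α - β) := by
    rw [cos_pi_sub, hθ_angle, InnerProductGeometry.cos_angle,
      inner_eq_mul_cos_sub hα₀ hα₁ hβ₀ hβ₁, mul_div_cancel_left₀ _ (by positivity)]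
  have hS : {φ | sgn (inner ℝ (x φ) wm) ≠ sgn (inner ℝ (x φ) wn)}
      =ᵐ[volume] {φ | cos (2 * φ - (α + β)) < cos (π - θ)} := by
    refine Filter.eventuallyEq_set.mpr ?_
    filter_upwards [ae_cos_sub_ne_zero α, ae_cos_sub_ne_zero β] with φ hφα hφβ
    rw [inner_eq_mul_cos_sub (hx₀ φ) (hx₁ φ) hα₀ hα₁,
      inner_eq_mul_cos_sub (hx₀ φ) (hx₁ φ) hβ₀ hβ₁, one_mul, one_mul, sgn_mul_of_pos hm,
      sgn_mul_of_pos hn, sgn_ne_sgn_iff_mul_neg hφα hφβ, cos_sub_mul_cos_sub_neg_iff, hcos]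
  have hθ₀ : 0 ≤ θ := hθ_angle ▸ InnerProductGeometry.angle_nonneg wm wn
  have hθπ : θ ≤ π := hθ_angle ▸ InnerProductGeometry.angle_le_pi wm wn
  rw [hP, Measure.smul_apply, smul_eq_mul, Measure.restrict_apply' measurableSet_Ico,
    measure_congr (hS.inter (Filter.EventuallyEq.refl _ (Ico (0 : ℝ) (2 * π)))),
    volume_setOf_cos_two_mul_sub_lt_inter_Ico _ (by linarith) (by linarith),
    sub_sub_cancel, ← ENNReal.div_eq_inv_mul, ← ENNReal.ofReal_div_of_pos (by positivity),
    mul_div_mul_left _ _ two_ne_zero]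
end
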